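/- arXiv:2006.10330 — 3 statements merged into one kernel-verified Lean document; each statement's English description precedes it below -/
import Mathlib

section
/- Let σ: ℝ → ℝ be an arbitrary function applied componentwise. Let T > 0, let θ1: [0,T] → ℝ^{d×d'} and b1: [0,T] → ℝ^d be continuous, and let θ2: [0,T] → ℝ^{d'×d} and b2: [0,T] → ℝ^{d'} be continuously differentiable. Suppose (q, v): [0,T] → ℝ^d × ℝ^{d'} is differentiable and satisfies the UpDown model q̇(t) = θ1(t) σ(v(t)) + b1(t), v̇(t) = θ2'(t) q(t) + (b2'(t) + θ2(t) b1(t)) + θ2(t) θ1(t) σ(v(t)) with initial condition v(0) = θ2(0) q(0) + b2(0). Then v(t) = θ2(t) q(t) + b2(t) for all t ∈ [0,T], and consequently q satisfies the single-hidden-layer ODE q̇(t) = θ1(t) σ(θ2(t) q(t) + b2(t)) + b1(t) on [0,T]. -/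
open Set

/-!
Along the given solution, the product rule shows that `w = θ2 q + b2` has derivative
`θ2' q + θ2 (θ1 σ(v) + b1) + b2'`, which is exactly the right-hand side prescribed for `v̇`
(both are written in terms of the same `v`). So `v - w` has zero derivative on `[0,T]` and
vanishes at `0`, hence `v = w` there; no uniqueness theorem for ODEs is needed.
-/

/-- Matrix-vector product for matrices represented as functions. -/
def mvec {m n : ℕ} (A : Fin m → Fin n → ℝ) (x : Fin n → ℝ) : Fin m → ℝ :=
  fun i => ∑ j, A i j * x j

/-- Matrix-matrix product for matrices represented as functions. -/
def mmul {m n p : ℕ} (A : Fin m → Fin n → ℝ) (B : Fin n → Fin p → ℝ) :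
    Fin m → Fin p → ℝ :=
  fun i j => ∑ l, A i l * B l j

theorem mvec_add {m n : ℕ} (A : Fin m → Fin n → ℝ) (x y : Fin n → ℝ) :
    mvec A (x + y) = mvec A x + mvec A y :=
  Matrix.mulVec_add (Matrix.of A) x y

theorem mvec_mmul {m n p : ℕ} (A : Fin m → Fin n → ℝ) (B : Fin n → Fin p → ℝ)
    (x : Fin p → ℝ) : mvec (mmul A B) x = mvec A (mvec B x) :=
  (Matrix.mulVec_mulVec x (Matrix.of A) (Matrix.of B)).symm

theorem HasDerivWithinAt.mvec {m n : ℕ} {A : ℝ → Fin m → Fin n → ℝ} {A' : Fin m → Fin n → ℝ}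
    {x : ℝ → Fin n → ℝ} {x' : Fin n → ℝ} {s : Set ℝ} {t : ℝ}
    (hA : HasDerivWithinAt A A' s t) (hx : HasDerivWithinAt x x' s t) :
    HasDerivWithinAt (fun u => mvec (A u) (x u)) (mvec A' (x t) + mvec (A t) x') s t := by
  refine hasDerivWithinAt_pi.2 fun i => ?_
  have := HasDerivWithinAt.fun_sum (u := Finset.univ) fun j _ =>
    (hasDerivWithinAt_pi.1 (hasDerivWithinAt_pi.1 hA i) j).mul (hasDerivWithinAt_pi.1 hx j)
  simpa only [_root_.mvec, Pi.add_apply, Pi.mul_apply, Finset.sum_add_distrib] using this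

theorem eqOn_Icc_of_hasDerivWithinAt_eq {E : Type*} [NormedAddCommGroup E] [NormedSpace ℝ E]
    {f g f' : ℝ → E} {a b : ℝ}
    (hf : ∀ t ∈ Icc a b, HasDerivWithinAt f (f' t) (Icc a b) t)
    (hg : ∀ t ∈ Icc a b, HasDerivWithinAt g (f' t) (Icc a b) t) (ha : f a = g a) :
    EqOn f g (Icc a b) := by
  have right {h : ℝ → E} (hh : ∀ t ∈ Icc a b, HasDerivWithinAt h (f' t) (Icc a b) t) :
      ∀ t ∈ Ico a b, HasDerivWithinAt h (f' t) (Ici t) t := fun t ht =>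
    (hh t (Ico_subset_Icc_self ht)).mono_of_mem_nhdsWithin (Icc_mem_nhdsGE_of_mem ht)
  exact eq_of_has_deriv_right_eq (right hf) (right hg)
    (fun t ht => (hf t ht).continuousWithinAt) (fun t ht => (hg t ht).continuousWithinAt) ha

theorem updown_to_single_hidden_layer_general
    (d d' : ℕ) (σ : ℝ → ℝ) (T : ℝ)
    (θ1 : ℝ → Fin d → Fin d' → ℝ) (b1 : ℝ → Fin d → ℝ)
    (θ2 : ℝ → Fin d' → Fin d → ℝ) (b2 : ℝ → Fin d' → ℝ)
    (θ2' : ℝ → Fin d' → Fin d → ℝ) (b2' : ℝ → Fin d' → ℝ)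
    (hθ2 : ∀ t ∈ Icc (0:ℝ) T, HasDerivWithinAt θ2 (θ2' t) (Icc 0 T) t)
    (hb2 : ∀ t ∈ Icc (0:ℝ) T, HasDerivWithinAt b2 (b2' t) (Icc 0 T) t)
    (q : ℝ → Fin d → ℝ) (v : ℝ → Fin d' → ℝ)
    (hq : ∀ t ∈ Icc (0:ℝ) T,
      HasDerivWithinAt q (mvec (θ1 t) (fun i => σ (v t i)) + b1 t) (Icc 0 T) t)
    (hvode : ∀ t ∈ Icc (0:ℝ) T,
      HasDerivWithinAt v
        (mvec (θ2' t) (q t) + (b2' t + mvec (θ2 t) (b1 t))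
          + mvec (mmul (θ2 t) (θ1 t)) (fun i => σ (v t i)))
        (Icc 0 T) t)
    (hv0 : v 0 = mvec (θ2 0) (q 0) + b2 0) :
    (∀ t ∈ Icc (0:ℝ) T, v t = mvec (θ2 t) (q t) + b2 t) ∧
    (∀ t ∈ Icc (0:ℝ) T,
      HasDerivWithinAt q
        (mvec (θ1 t) (fun i => σ ((mvec (θ2 t) (q t) + b2 t) i)) + b1 t)
        (Icc 0 T) t) := by
  have hw : ∀ t ∈ Icc (0:ℝ) T,
      HasDerivWithinAt (fun s => mvec (θ2 s) (q s) + b2 s)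
        (mvec (θ2' t) (q t) + (b2' t + mvec (θ2 t) (b1 t))
          + mvec (mmul (θ2 t) (θ1 t)) (fun i => σ (v t i))) (Icc 0 T) t := by
    intro t ht
    refine (((hθ2 t ht).mvec (hq t ht)).add (hb2 t ht)).congr_deriv ?_
    rw [mvec_add, mvec_mmul]
    abel
  have hv : ∀ t ∈ Icc (0:ℝ) T, v t = mvec (θ2 t) (q t) + b2 t :=
    eqOn_Icc_of_hasDerivWithinAt_eq hvode hw hv0
  exact ⟨hv, fun t ht => hv t ht ▸ hq t ht⟩

/-- From the `UpDown` model back to the single-hidden-layer ODE: if `(q, v)` solves the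
`UpDown` model `q̇ = θ1 σ(v) + b1`, `v̇ = θ2' q + (b2' + θ2 b1) + θ2 θ1 σ(v)` on `[0,T]`
with initial condition `v 0 = θ2(0) q(0) + b2(0)`, then `v(t) = θ2(t) q(t) + b2(t)` for
all `t ∈ [0,T]` and consequently `q` solves `q̇ = θ1 σ(θ2 q + b2) + b1` on `[0,T]`. -/
theorem updown_to_single_hidden_layer
    (d d' : ℕ) (σ : ℝ → ℝ) (T : ℝ) (hT : 0 < T)
    (θ1 : ℝ → Fin d → Fin d' → ℝ) (b1 : ℝ → Fin d → ℝ)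
    (θ2 : ℝ → Fin d' → Fin d → ℝ) (b2 : ℝ → Fin d' → ℝ)
    (θ2' : ℝ → Fin d' → Fin d → ℝ) (b2' : ℝ → Fin d' → ℝ)
    (hθ1 : ContinuousOn θ1 (Icc 0 T)) (hb1 : ContinuousOn b1 (Icc 0 T))
    (hθ2 : ∀ t ∈ Icc (0:ℝ) T, HasDerivWithinAt θ2 (θ2' t) (Icc 0 T) t)
    (hθ2' : ContinuousOn θ2' (Icc 0 T))
    (hb2 : ∀ t ∈ Icc (0:ℝ) T, HasDerivWithinAt b2 (b2' t) (Icc 0 T) t)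
    (hb2' : ContinuousOn b2' (Icc 0 T))
    (q : ℝ → Fin d → ℝ) (v : ℝ → Fin d' → ℝ)
    (hq : ∀ t ∈ Icc (0:ℝ) T,
      HasDerivWithinAt q (mvec (θ1 t) (fun i => σ (v t i)) + b1 t) (Icc 0 T) t)
    (hvode : ∀ t ∈ Icc (0:ℝ) T,
      HasDerivWithinAt v
        (mvec (θ2' t) (q t) + (b2' t + mvec (θ2 t) (b1 t))
          + mvec (mmul (θ2 t) (θ1 t)) (fun i => σ (v t i)))
        (Icc 0 T) t)
    (hv0 : v 0 = mvec (θ2 0) (q 0) + b2 0) :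
    (∀ t ∈ Icc (0:ℝ) T, v t = mvec (θ2 t) (q t) + b2 t) ∧
    (∀ t ∈ Icc (0:ℝ) T,
      HasDerivWithinAt q
        (mvec (θ1 t) (fun i => σ ((mvec (θ2 t) (q t) + b2 t) i)) + b1 t)
        (Icc 0 T) t) :=
  updown_to_single_hidden_layer_general d d' σ T θ1 b1 θ2 b2 θ2' b2' hθ2 hb2 q v hq hvode hv0
end

section
/- Let C ⊂ ℝ^d be compact and let F be a nonempty set of time-dependent vector fields f: [0,1] × ℝ^d → ℝ^d, each continuous in t and Lipschitz in x, such that for every f ∈ F and every z ∈ C the flow φ^f(t, z) exists on [0,1] and remains in C. Fix a component index k ∈ {1, ..., d} and points z_1, ..., z_n ∈ C. Suppose there is an integrable function M: [0,1] → ℝ such that for every t ∈ [0,1] and every family of points (y_{f,i})_{f ∈ F, 1 ≤ i ≤ n} in C one has E_ε[ sup_{f ∈ F} Σ_{i=1}^n ε_i f_k(t, y_{f,i}) ] ≤ M(t), where E_ε denotes the average over ε uniform on {−1, 1}^n, and suppose all suprema involved are finite. Then the empirical Rademacher complexity of the k-th components of the time-1 flow maps satisfies E_ε[ sup_{f ∈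 F} Σ_{i=1}^n ε_i (φ^f(1, z_i))_k ] ≤ ∫_0^1 M(t) dt. -/
/-!
By the fundamental theorem of calculus, `(φ^f(1, zᵢ))ₖ = (zᵢ)ₖ + ∫₀¹ fₖ(t, φ^f(t, zᵢ)) dt`.
The starting points `(zᵢ)ₖ` cancel in the average over signs. Fixing, for each sign pattern, a
near-maximizing field turns the sum of suprema into a single integral, whose integrand at time `t`
is at most `2ⁿ` times the Rademacher average of the fields at the points `φ^f(t, zᵢ) ∈ C`, hence
at most `2ⁿ M(t)`.
-/

open Set

/-- The sign `±1` associated with a Boolean Rademacher variable. -/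
def sg (b : Bool) : ℝ := if b then 1 else -1

open Finset MeasureTheory

lemma sum_sg_apply_eq_zero {ι : Type*} [Fintype ι] [DecidableEq ι] (i : ι) :
    ∑ e : ι → Bool, sg (e i) = 0 := by
  rw [← Fintype.piFinset_univ, Fintype.sum_piFinset_apply]
  simp [sg]

lemma sum_sum_sg_mul_eq_zero {ι : Type*} [Fintype ι] [DecidableEq ι] (c : ι → ℝ) :
    ∑ e : ι → Bool, ∑ i, sg (e i) * c i = 0 := by
  rw [sum_comm]
  simp [← sum_mul, sum_sg_apply_eq_zero]

/-- No boundedness is needed: an unbounded summand would make the sums along choice functions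
unbounded. -/
lemma sum_ciSup_le_of_forall_sum_le {ι κ : Type*} [Fintype ι] [Nonempty κ] {a : ι → κ → ℝ}
    {B : ℝ} (h : ∀ g : ι → κ, ∑ i, a i (g i) ≤ B) : ∑ i, ⨆ j, a i j ≤ B := by
  refine le_of_forall_pos_le_add fun ε hε => ?_
  set δ := ε / (Fintype.card ι + 1)
  have hδ : 0 < δ := by positivity
  choose g hg using fun i => exists_lt_of_lt_ciSup (sub_lt_self (⨆ j, a i j) hδ)
  have hcard : Fintype.card ι * δ ≤ ε := by
    rw [← mul_div_assoc, div_le_iff₀ (by positivity)]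
    nlinarith
  calc ∑ i, ⨆ j, a i j ≤ ∑ i, (a i (g i) + δ) := sum_le_sum fun i _ => by linarith [hg i]
    _ = ∑ i, a i (g i) + Fintype.card ι * δ := by
      rw [sum_add_distrib, sum_const, card_univ, nsmul_eq_mul]
    _ ≤ B + ε := add_le_add (h g) hcard

lemma rademacher_le_integral_of_eq_add_integral {ι κ : Type*} [Fintype ι] [DecidableEq ι]
    [Nonempty κ] {a b : ℝ} (hab : a ≤ b) (x : κ → ι → ℝ) (c : ι → ℝ) (u : κ → ι → ℝ → ℝ)
    (M : ℝ → ℝ) (hx : ∀ f i, x f i = c i + ∫ t in a..b, u f i t)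
    (hu : ∀ f i, IntervalIntegrable (u f i) volume a b) (hM : IntervalIntegrable M volume a b)
    (hbdd : ∀ e : ι → Bool, ∀ t ∈ Icc a b, BddAbove (range fun f => ∑ i, sg (e i) * u f i t))
    (hMu : ∀ t ∈ Icc a b,
      (∑ e : ι → Bool, ⨆ f, ∑ i, sg (e i) * u f i t) / 2 ^ Fintype.card ι ≤ M t) :
    (∑ e : ι → Bool, ⨆ f, ∑ i, sg (e i) * x f i) / 2 ^ Fintype.card ι
      ≤ ∫ t in a..b, M t := by
  rw [div_le_iff₀ (by positivity)]
  refine sum_ciSup_le_of_forall_sum_le fun g => ?_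
  have hint : ∀ e : ι → Bool,
      IntervalIntegrable (fun t => ∑ i, sg (e i) * u (g e) i t) volume a b := fun e => by
    simpa only [sum_fn] using IntervalIntegrable.sum (f := fun i t => sg (e i) * u (g e) i t) _
      fun i _ => (hu (g e) i).const_mul _
  have hpointwise : ∀ t ∈ Icc a b,
      ∑ e : ι → Bool, ∑ i, sg (e i) * u (g e) i t ≤ 2 ^ Fintype.card ι * M t := fun t ht =>
    calc ∑ e : ι → Bool, ∑ i, sg (e i) * u (g e) i t
        ≤ ∑ e : ι → Bool, ⨆ f, ∑ i, sg (e i) * u f i t :=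
          sum_le_sum fun e _ => le_ciSup (hbdd e t ht) (g e)
      _ ≤ 2 ^ Fintype.card ι * M t := by
          rw [mul_comm, ← div_le_iff₀ (by positivity)]; exact hMu t ht
  have hint_sum : IntervalIntegrable (fun t => ∑ e : ι → Bool, ∑ i, sg (e i) * u (g e) i t)
      volume a b := by
    simpa only [sum_fn] using IntervalIntegrable.sum _ fun e _ => hint e
  calc ∑ e : ι → Bool, ∑ i, sg (e i) * x (g e) i
      = ∫ t in a..b, ∑ e : ι → Bool, ∑ i, sg (e i) * u (g e) i t := by
        simp_rw [hx, mul_add, sum_add_distrib, sum_sum_sg_mul_eq_zero, zero_add,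
          ← intervalIntegral.integral_const_mul]
        rw [intervalIntegral.integral_finsetSum fun e _ => hint e]
        congr 1 with e
        rw [intervalIntegral.integral_finsetSum fun i _ => (hu (g e) i).const_mul _]
    _ ≤ ∫ t in a..b, 2 ^ Fintype.card ι * M t :=
        intervalIntegral.integral_mono_on hab hint_sum (hM.const_mul _) hpointwise
    _ = (∫ t in a..b, M t) * 2 ^ Fintype.card ι := by
        rw [intervalIntegral.integral_const_mul, mul_comm]

lemma intervalIntegral.integral_eq_sub_of_hasDerivWithinAt_Icc {E : Type*}
    [NormedAddCommGroup E] [NormedSpace ℝ E] [CompleteSpace E] {f f' : ℝ → E} {a b : ℝ}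
    (hab : a ≤ b) (hf : ∀ t ∈ Icc a b, HasDerivWithinAt f (f' t) (Icc a b) t)
    (hint : IntervalIntegrable f' volume a b) : ∫ t in a..b, f' t = f b - f a :=
  integral_eq_sub_of_hasDerivAt_of_le hab (fun t ht => (hf t ht).continuousWithinAt)
    (fun t ht => (hf t (Ioo_subset_Icc_self ht)).hasDerivAt (Icc_mem_nhds ht.1 ht.2)) hint

lemma ContinuousOn.apply_of_continuous_lipschitzWith {α β γ : Type*} [TopologicalSpace α]
    [PseudoEMetricSpace β] [PseudoEMetricSpace γ] {f : α → β → γ} {K : NNReal}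
    (hcont : ∀ y, Continuous fun t => f t y) (hlip : ∀ t, LipschitzWith K (f t)) {p : α → β}
    {s : Set α} (hp : ContinuousOn p s) : ContinuousOn (fun t => f t (p t)) s :=
  (continuous_prod_of_continuous_lipschitzWith' (fun q : α × β => f q.1 q.2) K hlip
    hcont).comp_continuousOn (continuousOn_id.prodMk hp)

theorem rademacher_flow_le_integral_bound_general
    (d n : ℕ) (k : Fin d)
    (C : Set (Fin d → ℝ))
    (F : Set (ℝ → (Fin d → ℝ) → Fin d → ℝ)) (hF : F.Nonempty)
    (hreg : ∀ f ∈ F, (∀ x, Continuous fun t => f t x) ∧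
      ∃ L : NNReal, ∀ t : ℝ, LipschitzWith L (f t))
    (φ : (ℝ → (Fin d → ℝ) → Fin d → ℝ) → (Fin d → ℝ) → ℝ → Fin d → ℝ)
    -- for every `f ∈ F` and `z ∈ C`, the flow exists on [0,1] and remains in `C`
    (hφ0 : ∀ f ∈ F, ∀ z ∈ C, φ f z 0 = z)
    (hφode : ∀ f ∈ F, ∀ z ∈ C, ∀ t ∈ Icc (0:ℝ) 1,
      HasDerivWithinAt (φ f z) (f t (φ f z t)) (Icc 0 1) t)
    (hφC : ∀ f ∈ F, ∀ z ∈ C, ∀ t ∈ Icc (0:ℝ) 1, φ f z t ∈ C)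
    (z : Fin n → Fin d → ℝ) (hz : ∀ i, z i ∈ C)
    (M : ℝ → ℝ) (hM : IntervalIntegrable M MeasureTheory.volume 0 1)
    -- the Rademacher average of the fields at arbitrary points of C is bounded by M(t)
    (hMbound : ∀ t ∈ Icc (0:ℝ) 1, ∀ y : F → Fin n → Fin d → ℝ,
      (∀ f : F, ∀ i : Fin n, y f i ∈ C) →
      (∑ e : Fin n → Bool, ⨆ f : F, ∑ i, sg (e i) * f.1 t (y f i) k) / 2 ^ n ≤ M t)
    -- finiteness of all suprema involved
    (hbdd2 : ∀ e : Fin n → Bool, ∀ t ∈ Icc (0:ℝ) 1, ∀ y : F → Fin n → Fin d → ℝ,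
      (∀ f : F, ∀ i : Fin n, y f i ∈ C) →
      BddAbove (Set.range fun f : F => ∑ i, sg (e i) * f.1 t (y f i) k)) :
    (∑ e : Fin n → Bool, ⨆ f : F, ∑ i, sg (e i) * φ f.1 (z i) 1 k) / 2 ^ n
      ≤ ∫ t in (0:ℝ)..1, M t := by
  have : Nonempty F := hF.to_subtype
  have hfield : ∀ f ∈ F, ∀ w ∈ C,
      ContinuousOn (fun t => f t (φ f w t) k) (Icc 0 1) := fun f hf w hw => by
    obtain ⟨hcont, L, hlip⟩ := hreg f hf
    exact (continuous_apply k).comp_continuousOn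
      (ContinuousOn.apply_of_continuous_lipschitzWith hcont hlip
        fun t ht => (hφode f hf w hw t ht).continuousWithinAt)
  have hint : ∀ f ∈ F, ∀ w ∈ C,
      IntervalIntegrable (fun t => f t (φ f w t) k) volume 0 1 := fun f hf w hw =>
    (hfield f hf w hw).intervalIntegrable_of_Icc zero_le_one
  have hFTC : ∀ f ∈ F, ∀ w ∈ C, φ f w 1 k = w k + ∫ t in (0:ℝ)..1, f t (φ f w t) k :=
    fun f hf w hw => by
      rw [intervalIntegral.integral_eq_sub_of_hasDerivWithinAt_Icc zero_le_one
        (fun t ht => hasDerivWithinAt_pi.1 (hφode f hf w hw t ht) k) (hint f hf w hw),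
        hφ0 f hf w hw]
      ring
  have hyC : ∀ t ∈ Icc (0:ℝ) 1, ∀ (f : F) i, φ f.1 (z i) t ∈ C := fun t ht f i =>
    hφC f.1 f.2 (z i) (hz i) t ht
  simpa only [Fintype.card_fin] using rademacher_le_integral_of_eq_add_integral zero_le_one
    (fun (f : F) i => φ f.1 (z i) 1 k) (fun i => z i k)
    (fun (f : F) i t => f.1 t (φ f.1 (z i) t) k) M (fun f i => hFTC f.1 f.2 (z i) (hz i))
    (fun f i => hint f.1 f.2 (z i) (hz i)) hM (fun e t ht => hbdd2 e t ht _ (hyC t ht))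
    (fun t ht => by simpa only [Fintype.card_fin] using hMbound t ht _ (hyC t ht))

/-- If the (empirical) Rademacher complexity of the `k`-th components of the vector
fields in `F`, evaluated at arbitrary families of points of the compact set `C`, is
bounded by an integrable function `M(t)`, then the empirical Rademacher complexity of
the `k`-th components of the time-1 flow maps at points `z₁, …, zₙ ∈ C` is bounded by
`∫₀¹ M(t) dt`. -/
theorem rademacher_flow_le_integral_bound
    (d n : ℕ) (k : Fin d)
    (C : Set (Fin d → ℝ)) (hC : IsCompact C)
    (F : Set (ℝ → (Fin d → ℝ) → Fin d → ℝ)) (hF : F.Nonempty)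
    (hreg : ∀ f ∈ F, (∀ x, Continuous fun t => f t x) ∧
      ∃ L : NNReal, ∀ t : ℝ, LipschitzWith L (f t))
    (φ : (ℝ → (Fin d → ℝ) → Fin d → ℝ) → (Fin d → ℝ) → ℝ → Fin d → ℝ)
    -- for every `f ∈ F` and `z ∈ C`, the flow exists on [0,1] and remains in `C`
    (hφ0 : ∀ f ∈ F, ∀ z ∈ C, φ f z 0 = z)
    (hφode : ∀ f ∈ F, ∀ z ∈ C, ∀ t ∈ Icc (0:ℝ) 1,
      HasDerivWithinAt (φ f z) (f t (φ f z t)) (Icc 0 1) t)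
    (hφC : ∀ f ∈ F, ∀ z ∈ C, ∀ t ∈ Icc (0:ℝ) 1, φ f z t ∈ C)
    (z : Fin n → Fin d → ℝ) (hz : ∀ i, z i ∈ C)
    (M : ℝ → ℝ) (hM : IntervalIntegrable M MeasureTheory.volume 0 1)
    -- the Rademacher average of the fields at arbitrary points of C is bounded by M(t)
    (hMbound : ∀ t ∈ Icc (0:ℝ) 1, ∀ y : F → Fin n → Fin d → ℝ,
      (∀ f : F, ∀ i : Fin n, y f i ∈ C) →
      (∑ e : Fin n → Bool, ⨆ f : F, ∑ i, sg (e i) * f.1 t (y f i) k) / 2 ^ n ≤ M t)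
    -- finiteness of all suprema involved
    (hbdd1 : ∀ e : Fin n → Bool,
      BddAbove (Set.range fun f : F => ∑ i, sg (e i) * φ f.1 (z i) 1 k))
    (hbdd2 : ∀ e : Fin n → Bool, ∀ t ∈ Icc (0:ℝ) 1, ∀ y : F → Fin n → Fin d → ℝ,
      (∀ f : F, ∀ i : Fin n, y f i ∈ C) →
      BddAbove (Set.range fun f : F => ∑ i, sg (e i) * f.1 t (y f i) k)) :
    (∑ e : Fin n → Bool, ⨆ f : F, ∑ i, sg (e i) * φ f.1 (z i) 1 k) / 2 ^ n
      ≤ ∫ t in (0:ℝ)..1, M t :=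
  rademacher_flow_le_integral_bound_general d n k C F hF hreg φ hφ0 hφode hφC z hz M hM hMbound
    hbdd2
end

section
/- Consider the linear-quadratic particle shooting system: σ: ℝ → ℝ is continuously differentiable and applied componentwise, M_A and M_b are symmetric positive definite d×d real matrices, and (q_j, p_j): [0,T] → ℝ^d × ℝ^d (j = 1, ..., K) are differentiable curves satisfying q̇_j(t) = A(t) σ(q_j(t)) + b(t) and ṗ_j(t) = − Dσ(q_j(t)) A(t)^⊤ p_j(t), with A(t) = − M_A^{-1} Σ_{j=1}^K p_j(t) σ(q_j(t))^⊤ and b(t) = − M_b^{-1} Σ_{j=1}^K p_j(t). Then the total regularization cost equals its initial value times the time horizon: ∫_0^T [½ Tr(A(t)^⊤ M_A A(t)) + ½ b(t)^⊤ M_b b(t)] dt = T · [½ Tr(A(0)^⊤ M_A A(0)) + ½ b(0)^⊤ M_b b(0)], so the regularization term of the objective is a function of the initial particle conditions (q_j(0), p_j(0)) alone. -/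
/-!
The regularizer is the conserved energy of the shooting flow. With `G = ∑ⱼ pⱼ σ(qⱼ)ᵀ` and
`s = ∑ⱼ pⱼ`, the relations `A = -M_A⁻¹ G`, `b = -M_b⁻¹ s` turn `½ Tr(Aᵀ M_A A)` into
`½ Tr(Gᵀ M_A⁻¹ G)` and `½ bᵀ M_b b` into `½ sᵀ M_b⁻¹ s`; as `M_A`, `M_b` are symmetric, the
time derivative of the regularizer is `-(⟨Ġ, A⟩ + ⟨ṡ, b⟩)`. By the product rule particle `j`
contributes `ṗⱼ ⬝ (A σ(qⱼ) + b) + pⱼ ⬝ A Dσ(qⱼ) q̇ⱼ`, and the costate equation rewrites the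
second term as `-ṗⱼ ⬝ q̇ⱼ`, so the state equation makes the contribution vanish. Hence the
integrand is constant on `[0, T]`.
-/

open Set Matrix

theorem intervalIntegral.integral_eq_sub_smul_of_hasDerivWithinAt_zero {E : Type*}
    [NormedAddCommGroup E] [NormedSpace ℝ E] [CompleteSpace E] {f : ℝ → E} {a b : ℝ}
    (hab : a ≤ b) (hf : ∀ x ∈ Icc a b, HasDerivWithinAt f 0 (Icc a b) x) :
    ∫ x in a..b, f x = (b - a) • f a := by
  have hconst : ∀ x ∈ Icc a b, f x = f a :=
    constant_of_has_deriv_right_zero (fun x hx => (hf x hx).continuousWithinAt) fun x hx =>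
      (hf x (Ico_subset_Icc_self hx)).mono_of_mem_nhdsWithin (Icc_mem_nhdsGE_of_mem hx)
  rw [intervalIntegral.integral_congr (g := fun _ => f a) fun x hx => hconst x <| by
    rwa [uIcc_of_le hab] at hx, intervalIntegral.integral_const]

namespace Matrix

variable {m n R : Type*} [Fintype n] [CommSemiring R]

theorem transpose_mul_apply {l : Type*} (N : Matrix m n R) (Y : Matrix n l R) (c : l) :
    (N * Y)ᵀ c = N *ᵥ Yᵀ c := by
  ext i
  simp [mul_apply, mulVec, dotProduct]

theorem trace_transpose_mul_eq_sum [Fintype m] (X Y : Matrix m n R) :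
    trace (Xᵀ * Y) = ∑ c, Xᵀ c ⬝ᵥ Yᵀ c := by
  simp [trace, mul_apply, dotProduct]

theorem trace_transpose_mul_mul_self_eq_sum [Fintype m] (X : Matrix m n R) (M : Matrix m m R) :
    trace (Xᵀ * M * X) = ∑ c, Xᵀ c ⬝ᵥ M *ᵥ Xᵀ c := by
  rw [Matrix.mul_assoc, trace_transpose_mul_eq_sum]
  simp only [transpose_mul_apply]

theorem trace_transpose_vecMulVec_mul (u w : n → R) (A : Matrix n n R) :
    trace ((vecMulVec u w)ᵀ * A) = u ⬝ᵥ A *ᵥ w := by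
  rw [transpose_vecMulVec, vecMulVec_mul, trace_vecMulVec, dotProduct_comm, dotProduct_mulVec]

end Matrix

section Calculus

variable {ι n 𝕜 : Type*} [Fintype n] [NontriviallyNormedField 𝕜] {s : Set 𝕜} {t : 𝕜}

theorem HasDerivWithinAt.dotProduct {u v : 𝕜 → n → 𝕜} {u' v' : n → 𝕜}
    (hu : HasDerivWithinAt u u' s t) (hv : HasDerivWithinAt v v' s t) :
    HasDerivWithinAt (fun τ => u τ ⬝ᵥ v τ) (u' ⬝ᵥ v t + u t ⬝ᵥ v') s t := by
  rw [show u' ⬝ᵥ v t + u t ⬝ᵥ v' = ∑ i, (u' i * v t i + u t i * v' i) from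
    Finset.sum_add_distrib.symm]
  exact HasDerivWithinAt.fun_sum fun i _ =>
    (hasDerivWithinAt_pi.1 hu i).fun_mul (hasDerivWithinAt_pi.1 hv i)

theorem HasDerivWithinAt.mulVec {m : Type*} [Fintype m] (M : Matrix m n 𝕜) {u : 𝕜 → n → 𝕜}
    {u' : n → 𝕜} (hu : HasDerivWithinAt u u' s t) :
    HasDerivWithinAt (fun τ => M *ᵥ u τ) (M *ᵥ u') s t :=
  hasDerivWithinAt_pi.2 fun i => by
    have hrow := (hasDerivWithinAt_const t s (M i)).dotProduct hu
    rwa [zero_dotProduct, zero_add] at hrow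

theorem HasDerivWithinAt.dotProduct_mulVec_self {N : Matrix n n 𝕜} (hN : N.IsSymm)
    {u : 𝕜 → n → 𝕜} {u' : n → 𝕜} (hu : HasDerivWithinAt u u' s t) :
    HasDerivWithinAt (fun τ => u τ ⬝ᵥ N *ᵥ u τ) (2 * (u' ⬝ᵥ N *ᵥ u t)) s t := by
  convert hu.dotProduct (hu.mulVec N) using 1
  rw [dotProduct_mulVec, ← mulVec_transpose, hN.eq, dotProduct_comm]
  ring

theorem HasDerivWithinAt.componentwise_comp [DecidableEq n] {σ : 𝕜 → 𝕜} (hσ : Differentiable 𝕜 σ)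
    {q : 𝕜 → n → 𝕜} {q' : n → 𝕜} (hq : HasDerivWithinAt q q' s t) :
    HasDerivWithinAt (fun τ i => σ (q τ i)) (diagonal (fun i => deriv σ (q t i)) *ᵥ q') s t :=
  hasDerivWithinAt_pi.2 fun i => by
    rw [mulVec_diagonal]
    exact (hσ _).hasDerivAt.comp_hasDerivWithinAt t (hasDerivWithinAt_pi.1 hq i)

theorem hasDerivWithinAt_sum_vecMulVec_transpose_apply [Fintype ι] {u w : ι → 𝕜 → n → 𝕜}
    {u' w' : ι → n → 𝕜} (hu : ∀ j, HasDerivWithinAt (u j) (u' j) s t)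
    (hw : ∀ j, HasDerivWithinAt (w j) (w' j) s t) (c : n) :
    HasDerivWithinAt (fun τ => (∑ j, vecMulVec (u j τ) (w j τ))ᵀ c)
      ((∑ j, (vecMulVec (u' j) (w j t) + vecMulVec (u j t) (w' j)))ᵀ c) s t := by
  convert HasDerivWithinAt.fun_sum (u := Finset.univ) fun j _ =>
    (hasDerivWithinAt_pi.1 (hw j) c).smul (hu j) using 1 <;> ext <;>
    simp [Matrix.sum_apply, vecMulVec_apply, Finset.sum_add_distrib, mul_comm]

end Calculus

section Energy

variable {n : Type*} [Fintype n] [DecidableEq n] {M : Matrix n n ℝ} {s : Set ℝ} {t : ℝ}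

theorem hasDerivWithinAt_half_dotProduct_mulVec_self_of_eq_neg_inv_mulVec (hM : M.IsSymm)
    (hdet : IsUnit M.det) {x y : ℝ → n → ℝ} {y' : n → ℝ} (hx : ∀ τ, x τ = -(M⁻¹ *ᵥ y τ))
    (hy : HasDerivWithinAt y y' s t) :
    HasDerivWithinAt (fun τ => (1/2) * (x τ ⬝ᵥ M *ᵥ x τ)) (-(y' ⬝ᵥ x t)) s t := by
  have henergy : ∀ τ, x τ ⬝ᵥ M *ᵥ x τ = y τ ⬝ᵥ M⁻¹ *ᵥ y τ := fun τ => by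
    rw [hx, mulVec_neg, mulVec_mulVec, mul_nonsing_inv _ hdet, one_mulVec, neg_dotProduct,
      dotProduct_neg, neg_neg, dotProduct_comm]
  have hderiv := (hy.dotProduct_mulVec_self hM.inv).const_mul (1/2)
  simp only [← henergy] at hderiv
  refine hderiv.congr_deriv ?_
  rw [hx, dotProduct_neg]
  ring

theorem hasDerivWithinAt_half_trace_transpose_mul_mul_self_of_eq_neg_inv_mul (hM : M.IsSymm)
    (hdet : IsUnit M.det) {X Y : ℝ → Matrix n n ℝ} {Y' : Matrix n n ℝ}
    (hX : ∀ τ, X τ = -(M⁻¹ * Y τ)) (hY : ∀ c, HasDerivWithinAt (fun τ => (Y τ)ᵀ c) (Y'ᵀ c) s t) :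
    HasDerivWithinAt (fun τ => (1/2) * trace ((X τ)ᵀ * M * X τ)) (-trace (Y'ᵀ * X t)) s t := by
  simp only [trace_transpose_mul_mul_self_eq_sum, trace_transpose_mul_eq_sum, Finset.mul_sum,
    ← Finset.sum_neg_distrib]
  refine HasDerivWithinAt.fun_sum fun c _ =>
    hasDerivWithinAt_half_dotProduct_mulVec_self_of_eq_neg_inv_mulVec hM hdet (fun τ => ?_) (hY c)
  rw [hX, transpose_neg, ← transpose_mul_apply]
  rfl

end Energy

theorem shooting_particle_power_eq_zero {n : Type*} [Fintype n] [DecidableEq n]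
    (A : Matrix n n ℝ) (b p v w : n → ℝ) {q' p' : n → ℝ}
    (hq' : q' = A *ᵥ v + b) (hp' : p' = -(diagonal w *ᵥ (Aᵀ *ᵥ p))) :
    p' ⬝ᵥ A *ᵥ v + p ⬝ᵥ A *ᵥ (diagonal w *ᵥ q') + p' ⬝ᵥ b = 0 := by
  have hcostate : p ⬝ᵥ A *ᵥ (diagonal w *ᵥ q') = -(p' ⬝ᵥ q') := by
    rw [hp', neg_dotProduct, neg_neg, dotProduct_mulVec, dotProduct_mulVec, mulVec_transpose,
      ← vecMul_transpose, diagonal_transpose]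
  rw [hcostate, hq', dotProduct_add]
  ring

theorem shooting_power_eq_zero {ι n : Type*} [Fintype ι] [Fintype n] [DecidableEq n]
    {A : Matrix n n ℝ} {b : n → ℝ} {p v w q' p' : ι → n → ℝ}
    (hq' : ∀ j, q' j = A *ᵥ v j + b) (hp' : ∀ j, p' j = -(diagonal (w j) *ᵥ (Aᵀ *ᵥ p j))) :
    trace ((∑ j, (vecMulVec (p' j) (v j) + vecMulVec (p j) (diagonal (w j) *ᵥ q' j)))ᵀ * A)
      + (∑ j, p' j) ⬝ᵥ b = 0 := by
  simp only [transpose_sum, transpose_add, Finset.sum_mul, add_mul, trace_sum, trace_add,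
    trace_transpose_vecMulVec_mul, sum_dotProduct, ← Finset.sum_add_distrib]
  exact Finset.sum_eq_zero fun j _ =>
    shooting_particle_power_eq_zero A b (p j) (v j) (w j) (hq' j) (hp' j)

/-- The total regularization cost of the linear-quadratic particle shooting system equals
its initial value times the time horizon:
`∫₀ᵀ [½ Tr(A(t)ᵀ M_A A(t)) + ½ b(t)ᵀ M_b b(t)] dt
  = T · [½ Tr(A(0)ᵀ M_A A(0)) + ½ b(0)ᵀ M_b b(0)]`,
so the regularization term is a function of the initial particle conditions alone. -/
theorem shooting_regularization_integral
    (d K : ℕ) (σ : ℝ → ℝ) (hσ : ContDiff ℝ 1 σ)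
    (T : ℝ) (hT : 0 < T)
    (MA Mb : Matrix (Fin d) (Fin d) ℝ)
    (hMAsymm : MA.IsSymm) (hMApos : MA.PosDef)
    (hMbsymm : Mb.IsSymm) (hMbpos : Mb.PosDef)
    (q p : Fin K → ℝ → Fin d → ℝ)
    (A : ℝ → Matrix (Fin d) (Fin d) ℝ) (b : ℝ → Fin d → ℝ)
    (hA : ∀ t, A t = -(MA⁻¹ * ∑ j, vecMulVec (p j t) (fun i => σ (q j t i))))
    (hb : ∀ t, b t = -(Mb⁻¹.mulVec (∑ j, p j t)))
    (hq : ∀ j, ∀ t ∈ Icc (0:ℝ) T,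
      HasDerivWithinAt (q j) ((A t).mulVec (fun i => σ (q j t i)) + b t) (Icc 0 T) t)
    (hp : ∀ j, ∀ t ∈ Icc (0:ℝ) T,
      HasDerivWithinAt (p j)
        (-(Matrix.diagonal (fun i => deriv σ (q j t i))).mulVec ((A t)ᵀ.mulVec (p j t)))
        (Icc 0 T) t) :
    ∫ t in (0:ℝ)..T,
        ((1/2) * Matrix.trace ((A t)ᵀ * MA * A t) + (1/2) * (b t ⬝ᵥ Mb.mulVec (b t)))
      = T * ((1/2) * Matrix.trace ((A 0)ᵀ * MA * A 0)
          + (1/2) * (b 0 ⬝ᵥ Mb.mulVec (b 0))) := by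
  have hσ' : Differentiable ℝ σ := hσ.differentiable one_ne_zero
  rw [intervalIntegral.integral_eq_sub_smul_of_hasDerivWithinAt_zero hT.le, sub_zero, smul_eq_mul]
  intro t ht
  have hG := hasDerivWithinAt_sum_vecMulVec_transpose_apply (fun j => hp j t ht)
    fun j => (hq j t ht).componentwise_comp hσ'
  have hs := HasDerivWithinAt.fun_sum (u := Finset.univ) fun j _ => hp j t ht
  have hR := (hasDerivWithinAt_half_trace_transpose_mul_mul_self_of_eq_neg_inv_mul hMAsymm
    hMApos.det_pos.ne'.isUnit hA hG).add
    (hasDerivWithinAt_half_dotProduct_mulVec_self_of_eq_neg_inv_mulVec hMbsymm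
      hMbpos.det_pos.ne'.isUnit hb hs)
  rwa [← neg_add, shooting_power_eq_zero (fun j => rfl) (fun j => rfl), neg_zero] at hR
end
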